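/- Matching a non-linear pattern decomposes into linear matching plus a consistency check: for all terms t and u, letting t′ = rename₁(t, ε) and P = {{p | t[p] = x} | x ∈ vars(t)} be the consistency partition induced by t, the term u matches t if and only if u matches t′ and u is consistent with respect to P (i.e., for every class C ∈ P and all positions p, q ∈ C, u[p] = u[q]). -/

import Mathlib

inductive Term (V F : Type) : Type where
  | var : V → Term V F
  | app : F → List (Term V F) → Term V F

namespace Term

variable {V W U F : Type}

/-- Equality modulo variables. -/
inductive EqMod : Term V F → Term W F → Prop
  | var (x : V) (y : W) : EqMod (var x) (var y)
  | app (f : F) {ts : List (Term V F)} {us : List (Term W F)}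
      (hlen : ts.length = us.length)
      (h : ∀ tu ∈ List.zip ts us, EqMod tu.1 tu.2) :
      EqMod (app f ts) (app f us)

/-- Subterm at a position (0-based). -/
def subterm : List ℕ → Term V F → Option (Term V F)
  | [], t => some t
  | _ :: _, var _ => none
  | i :: p, app _ ts => (ts[i]?).bind (subterm p)

/-- Homomorphic application of a substitution. -/
def subst (σ : V → Term W F) : Term V F → Term W F
  | var x => σ x
  | app f ts => app f (ts.attach.map fun t => subst σ t.1)
termination_by t => sizeOf t
decreasing_by simp only [Term.app.sizeOf_spec]; have := List.sizeOf_lt_of_mem t.2; omega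

/-- Number of occurrences of a variable. -/
def countVar [DecidableEq V] (x : V) : Term V F → ℕ
  | var y => if y = x then 1 else 0
  | app _ ts => (ts.attach.map fun t => countVar x t.1).sum
termination_by t => sizeOf t
decreasing_by simp only [Term.app.sizeOf_spec]; have := List.sizeOf_lt_of_mem t.2; omega

/-- A term is linear if every variable occurs at most once. -/
def Linear [DecidableEq V] (t : Term V F) : Prop := ∀ x, countVar x t ≤ 1

/-- Well-formed with respect to a ranked alphabet. -/
inductive WF (ar : F → ℕ) : Term V F → Prop
  | var (x : V) : WF ar (var x)
  | app (f : F) {ts : List (Term V F)} (hlen : ts.length = ar f)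
      (h : ∀ t ∈ ts, WF ar t) : WF ar (app f ts)

/-- Ground terms contain no variables. -/
inductive Ground : Term V F → Prop
  | app (f : F) {ts : List (Term V F)} (h : ∀ t ∈ ts, Ground t) : Ground (app f ts)

/-- Renaming: replace the variable at position p by the position variable p. -/
def rename1 : Term V F → List ℕ → Term (List ℕ) F
  | var _, p => var p
  | app f ts, p => app f (ts.attach.mapIdx fun i t => rename1 t.1 (p ++ [i]))
termination_by t _ => sizeOf t
decreasing_by simp only [Term.app.sizeOf_spec]; have := List.sizeOf_lt_of_mem t.2; omega

end Term

/-! A match `σ` of `t` against `u` induces a match of the linearized term by sending the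
position variable `p` to the subterm of `u` at `p`; consistency holds because both occurrences
of `x` become `σ x`. Conversely, a match `τ` of the linearized term places `τ p` at every
variable position `p` of `t`, so consistency forces `τ` to be constant on the occurrences of
each variable, and `τ` factors through the variables of `t`. -/

namespace Term

variable {V W F : Type}

theorem subst_app (σ : V → Term W F) (f : F) (ts : List (Term V F)) :
    subst σ (app f ts) = app f (ts.map (subst σ)) := by
  rw [subst, List.attach_map_val]

theorem rename1_app (f : F) (ts : List (Term V F)) (q : List ℕ) :
    rename1 (app f ts) q = app f (ts.mapIdx fun i t => rename1 t (q ++ [i])) := by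
  rw [rename1]
  congr 1
  apply List.ext_getElem?
  intro i
  cases h : ts[i]? <;> simp [List.getElem?_mapIdx, h]

theorem subterm_app_cons_eq_some {f : F} {ts : List (Term V F)} {i : ℕ} {p : List ℕ}
    {s : Term V F} :
    subterm (i :: p) (app f ts) = some s ↔ ∃ a, ts[i]? = some a ∧ subterm p a = some s := by
  rw [subterm, Option.bind_eq_some_iff]

theorem subterm_subst (σ : V → Term W F) :
    ∀ {p : List ℕ} {t s : Term V F}, subterm p t = some s →
      subterm p (subst σ t) = some (subst σ s)
  | [], _, _, h => by rw [subterm] at h ⊢; rw [Option.some_inj.mp h]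
  | _ :: _, var _, _, h => by simp [subterm] at h
  | i :: p, app f ts, s, h => by
    obtain ⟨a, ha, has⟩ := subterm_app_cons_eq_some.mp h
    rw [subst_app, subterm_app_cons_eq_some]
    exact ⟨subst σ a, by simp [ha], subterm_subst σ has⟩

theorem subterm_rename1 :
    ∀ {p : List ℕ} {t : Term V F} (q : List ℕ) {x : V},
      subterm p t = some (var x) → subterm p (rename1 t q) = some (var (q ++ p))
  | [], t, q, x, h => by
    rw [subterm, Option.some_inj] at h
    subst h
    simp [rename1, subterm]
  | _ :: _, var _, _, _, h => by simp [subterm] at h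
  | i :: p, app f ts, q, x, h => by
    obtain ⟨a, ha, has⟩ := subterm_app_cons_eq_some.mp h
    rw [rename1_app, subterm_app_cons_eq_some]
    exact ⟨rename1 a (q ++ [i]), by simp [List.getElem?_mapIdx, ha],
      by simpa using subterm_rename1 (q ++ [i]) has⟩

theorem subst_rename1_eq_subst (σ : V → Term W F) (τ : List ℕ → Term W F) :
    ∀ (t : Term V F) (q : List ℕ),
      (∀ p x, subterm p t = some (var x) → τ (q ++ p) = σ x) →
      subst τ (rename1 t q) = subst σ t
  | var x, q, h => by simpa [rename1, subst] using h [] x (by rw [subterm])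
  | app f ts, q, h => by
    rw [rename1_app, subst_app, subst_app]
    congr 1
    refine List.ext_getElem (by simp) fun i hi _ => ?_
    have hi' : i < ts.length := by simpa using hi
    rw [List.getElem_map, List.getElem_mapIdx, List.getElem_map]
    refine subst_rename1_eq_subst σ τ ts[i] (q ++ [i]) fun p x hp => ?_
    simpa using h (i :: p) x (subterm_app_cons_eq_some.mpr ⟨ts[i], by simp [hi'], hp⟩)
termination_by t => sizeOf t
decreasing_by
  have := List.sizeOf_lt_of_mem (List.getElem_mem hi')
  simp only [Term.app.sizeOf_spec]; omega

theorem subterm_subst_rename1 (τ : List ℕ → Term W F) {t : Term V F} {p : List ℕ} {x : V}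
    (hp : subterm p t = some (var x)) :
    subterm p (subst τ (rename1 t [])) = some (τ p) := by
  simpa [subst] using subterm_subst τ (subterm_rename1 [] hp)

end Term

theorem match_iff_linear_match_and_consistent {V F : Type} (t u : Term V F) :
    (∃ σ : V → Term V F, Term.subst σ t = u) ↔
      ((∃ σ : List ℕ → Term V F, Term.subst σ (Term.rename1 t []) = u) ∧
        ∀ (p q : List ℕ) (x : V), Term.subterm p t = some (Term.var x) →
          Term.subterm q t = some (Term.var x) →
          Term.subterm p u = Term.subterm q u) := by
  constructor
  · rintro ⟨σ, rfl⟩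
    refine ⟨⟨fun p => (Term.subterm p (Term.subst σ t)).getD (Term.subst σ t), ?_⟩, ?_⟩
    · refine Term.subst_rename1_eq_subst σ _ t [] fun p x hp => ?_
      simp [Term.subterm_subst σ hp, Term.subst]
    · intro p q x hp hq
      rw [Term.subterm_subst σ hp, Term.subterm_subst σ hq]
  · rintro ⟨⟨τ, rfl⟩, hcons⟩
    classical
    refine ⟨fun x => if h : ∃ p, Term.subterm p t = some (Term.var x) then τ h.choose
      else Term.subst τ (Term.rename1 t []),
      (Term.subst_rename1_eq_subst _ τ t [] fun p x hp => ?_).symm⟩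
    have hex : ∃ p, Term.subterm p t = some (Term.var x) := ⟨p, hp⟩
    rw [dif_pos hex, List.nil_append, ← Option.some_inj, ← Term.subterm_subst_rename1 τ hp,
      ← Term.subterm_subst_rename1 τ hex.choose_spec]
    exact hcons p hex.choose x hp hex.choose_spec
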